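/- Let G be the group presented by ⟨a, s, t | a² = 1, [a, t⁻¹at] = 1, [s,t] = 1, s⁻¹as = a·(t⁻¹at)⟩. Then every element g of G can be written in the form g = u · sᵖ tᑫ for some integers p, q, where u is a (possibly empty) finite product of elements each of which is of the form s⁻ⁱ a sⁱ with i < 0 or of the form t⁻ʲ a tʲ with j ∈ ℤ. -/

import Mathlib

/-- The three generators `a`, `s`, `t`. -/
inductive Gen : Type
  | a | s | t

/-- The relators of the presentation
`⟨a, s, t | a² = 1, [a, t⁻¹at] = 1, [s,t] = 1, s⁻¹as = a·(t⁻¹at)⟩`,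
where `[x,y] = x⁻¹y⁻¹xy`. -/
def rels : Set (FreeGroup Gen) :=
  { (FreeGroup.of Gen.a) ^ 2,
    (FreeGroup.of Gen.a)⁻¹ *
        ((FreeGroup.of Gen.t)⁻¹ * FreeGroup.of Gen.a * FreeGroup.of Gen.t)⁻¹ *
        FreeGroup.of Gen.a *
        ((FreeGroup.of Gen.t)⁻¹ * FreeGroup.of Gen.a * FreeGroup.of Gen.t),
    (FreeGroup.of Gen.s)⁻¹ * (FreeGroup.of Gen.t)⁻¹ * FreeGroup.of Gen.s * FreeGroup.of Gen.t,
    ((FreeGroup.of Gen.s)⁻¹ * FreeGroup.of Gen.a * FreeGroup.of Gen.s)⁻¹ *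
        (FreeGroup.of Gen.a *
          ((FreeGroup.of Gen.t)⁻¹ * FreeGroup.of Gen.a * FreeGroup.of Gen.t)) }

/-- The group `G` of the paper. -/
abbrev G := PresentedGroup rels

def a : G := PresentedGroup.of Gen.a
def s : G := PresentedGroup.of Gen.s
def t : G := PresentedGroup.of Gen.t

/-!
Let `M` be the submonoid generated by the lamps. Conjugation by each of `s`, `s⁻¹`, `t`, `t⁻¹`
maps every lamp into `M`, hence maps `M` into itself; so the elements `m * s ^ p * t ^ q` with
`m ∈ M` form a subset of `G` stable under left multiplication by the generators and their
inverses, which is therefore all of `G`.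

Writing `x^y = y⁻¹xy`, the relations `a² = 1`, `[s, t] = 1`, `a^s = a · a^t` are symmetric in
`s` and `t`, since they imply `a^t = a · a^s`. Conjugating by `tʲ` gives
`(a^(tʲ))^s = a^(tʲ) · a^(tʲ⁺¹)`. This computes the conjugates of the `t`-lamps by `s`, and,
read as the recursion `(a^(tʲ⁺¹))^(s⁻¹) = (a^(tʲ))^(s⁻¹) · a^(tʲ)` started at the lamp
`a^(s⁻¹)`, writes every `(a^(tʲ))^(s⁻¹)` as a product of lamps. By the symmetry the same
argument handles the conjugates of the `s`-lamps `a^(sⁱ)`, `i ≤ 0`, by `t` and `t⁻¹`.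
-/

theorem Submonoid.mul_mul_inv_mem_closure {H : Type*} [Group H] {S : Set H} {g m : H}
    (hS : ∀ x ∈ S, g * x * g⁻¹ ∈ closure S) (hm : m ∈ closure S) :
    g * m * g⁻¹ ∈ closure S :=
  closure_le (S := (closure S).comap (MulAut.conj g).toMonoidHom).2 hS hm

section Conjugates

variable {H : Type*} [Group H] {b x y : H}

theorem mul_zpow_conj_mul_inv (g b : H) (n : ℤ) :
    g * ((g ^ n)⁻¹ * b * g ^ n) * g⁻¹ = (g ^ (n - 1))⁻¹ * b * g ^ (n - 1) := by
  group

theorem inv_mul_zpow_conj_mul (g b : H) (n : ℤ) :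
    g⁻¹ * ((g ^ n)⁻¹ * b * g ^ n) * g = (g ^ (n + 1))⁻¹ * b * g ^ (n + 1) := by
  group

theorem zpow_conj_mul_self (hb : b * b = 1) (g : H) (n : ℤ) :
    (g ^ n)⁻¹ * b * g ^ n * ((g ^ n)⁻¹ * b * g ^ n) = 1 := by
  simp [mul_assoc, ← mul_assoc b b, hb]

theorem conj_eq_mul_conj_symm (hb : b * b = 1) (hrel : x⁻¹ * b * x = b * (y⁻¹ * b * y)) :
    y⁻¹ * b * y = b * (x⁻¹ * b * x) := by
  rw [hrel, ← mul_assoc, hb, one_mul]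

theorem inv_mul_zpow_conj_mul_of_commute (hxy : Commute x y)
    (hrel : x⁻¹ * b * x = b * (y⁻¹ * b * y)) (j : ℤ) :
    x⁻¹ * ((y ^ j)⁻¹ * b * y ^ j) * x =
      (y ^ j)⁻¹ * b * y ^ j * ((y ^ (j + 1))⁻¹ * b * y ^ (j + 1)) := by
  have hc : x * y ^ j = y ^ j * x := (hxy.zpow_right j).eq
  calc x⁻¹ * ((y ^ j)⁻¹ * b * y ^ j) * x = (y ^ j * x)⁻¹ * b * (y ^ j * x) := by group
    _ = (y ^ j)⁻¹ * (x⁻¹ * b * x) * y ^ j := by rw [← hc]; group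
    _ = _ := by rw [hrel]; group

theorem mul_zpow_conj_add_one_mul_inv (hb : b * b = 1) (hxy : Commute x y)
    (hrel : x⁻¹ * b * x = b * (y⁻¹ * b * y)) (j : ℤ) :
    x * ((y ^ (j + 1))⁻¹ * b * y ^ (j + 1)) * x⁻¹ =
      x * ((y ^ j)⁻¹ * b * y ^ j) * x⁻¹ * ((y ^ j)⁻¹ * b * y ^ j) := by
  have hY : (y ^ (j + 1))⁻¹ * b * y ^ (j + 1) =
      (y ^ j)⁻¹ * b * y ^ j * (x⁻¹ * ((y ^ j)⁻¹ * b * y ^ j) * x) := by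
    rw [inv_mul_zpow_conj_mul_of_commute hxy hrel, ← mul_assoc, zpow_conj_mul_self hb, one_mul]
  rw [hY]
  group

variable (P : Submonoid H)

theorem mul_zpow_conj_mul_inv_mem_of_nonpos (hb : b * b = 1) (hxy : Commute x y)
    (hrel : x⁻¹ * b * x = b * (y⁻¹ * b * y)) (hx : x * b * x⁻¹ ∈ P)
    (hy : ∀ i : ℤ, i ≤ 0 → (y ^ i)⁻¹ * b * y ^ i ∈ P) {j : ℤ} (hj : j ≤ 0) :
    x * ((y ^ j)⁻¹ * b * y ^ j) * x⁻¹ ∈ P := by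
  induction j, hj using Int.leInductionDown with
  | base => simpa using hx
  | pred j hj ih =>
    have h := mul_zpow_conj_add_one_mul_inv hb hxy hrel (j - 1)
    rw [sub_add_cancel] at h
    have h' : x * ((y ^ (j - 1))⁻¹ * b * y ^ (j - 1)) * x⁻¹ =
        x * ((y ^ j)⁻¹ * b * y ^ j) * x⁻¹ * ((y ^ (j - 1))⁻¹ * b * y ^ (j - 1)) := by
      rw [h, mul_assoc (x * _ * x⁻¹), zpow_conj_mul_self hb, mul_one]
    rw [h']
    exact P.mul_mem ih (hy _ (by omega))

theorem mul_zpow_conj_mul_inv_mem (hb : b * b = 1) (hxy : Commute x y)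
    (hrel : x⁻¹ * b * x = b * (y⁻¹ * b * y)) (hx : x * b * x⁻¹ ∈ P)
    (hy : ∀ i : ℤ, (y ^ i)⁻¹ * b * y ^ i ∈ P) (j : ℤ) :
    x * ((y ^ j)⁻¹ * b * y ^ j) * x⁻¹ ∈ P := by
  rcases le_total j 0 with hj | hj
  · exact mul_zpow_conj_mul_inv_mem_of_nonpos P hb hxy hrel hx (fun i _ ↦ hy i) hj
  induction j, hj using Int.leInduction with
  | base => simpa using hx
  | succ j _ ih =>
    rw [mul_zpow_conj_add_one_mul_inv hb hxy hrel]
    exact P.mul_mem ih (hy j)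

end Conjugates

theorem a_mul_a : a * a = 1 := by
  have h : a ^ 2 = 1 := PresentedGroup.one_of_mem (by simp [rels])
  rwa [pow_two] at h

theorem commute_s_t : Commute s t := by
  have h : s⁻¹ * t⁻¹ * s * t = 1 := PresentedGroup.one_of_mem (by simp [rels])
  calc s * t = t * s * (s⁻¹ * t⁻¹ * s * t) := by group
    _ = t * s := by rw [h, mul_one]

theorem s_conj_a : s⁻¹ * a * s = a * (t⁻¹ * a * t) := by
  have h : (s⁻¹ * a * s)⁻¹ * (a * (t⁻¹ * a * t)) = 1 :=
    PresentedGroup.one_of_mem (by simp [rels])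
  exact inv_mul_eq_one.mp h

theorem t_conj_a : t⁻¹ * a * t = a * (s⁻¹ * a * s) :=
  conj_eq_mul_conj_symm a_mul_a s_conj_a

def lamps : Set G :=
  {x | (∃ i : ℤ, i < 0 ∧ x = (s ^ i)⁻¹ * a * s ^ i) ∨
    ∃ j : ℤ, x = (t ^ j)⁻¹ * a * t ^ j}

def lampMonoid : Submonoid G := Submonoid.closure lamps

theorem t_lamp_mem_lampMonoid (j : ℤ) : (t ^ j)⁻¹ * a * t ^ j ∈ lampMonoid :=
  Submonoid.subset_closure (Or.inr ⟨j, rfl⟩)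

theorem a_mem_lampMonoid : a ∈ lampMonoid := by
  simpa using t_lamp_mem_lampMonoid 0

theorem s_lamp_mem_lampMonoid {i : ℤ} (hi : i ≤ 0) :
    (s ^ i)⁻¹ * a * s ^ i ∈ lampMonoid := by
  rcases hi.lt_or_eq with hi | rfl
  · exact Submonoid.subset_closure (Or.inl ⟨i, hi, rfl⟩)
  · simpa using a_mem_lampMonoid

theorem s_mul_lamp_mul_inv_mem : ∀ x ∈ lamps, s * x * s⁻¹ ∈ lampMonoid := by
  rintro _ (⟨i, hi, rfl⟩ | ⟨j, rfl⟩)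
  · rw [mul_zpow_conj_mul_inv]
    exact s_lamp_mem_lampMonoid (by omega)
  · refine mul_zpow_conj_mul_inv_mem _ a_mul_a commute_s_t s_conj_a ?_ t_lamp_mem_lampMonoid j
    simpa using s_lamp_mem_lampMonoid (i := -1) (by norm_num)

theorem s_inv_mul_lamp_mul_mem : ∀ x ∈ lamps, s⁻¹ * x * s⁻¹⁻¹ ∈ lampMonoid := by
  rintro _ (⟨i, hi, rfl⟩ | ⟨j, rfl⟩) <;> rw [inv_inv]
  · rw [inv_mul_zpow_conj_mul]
    exact s_lamp_mem_lampMonoid (by omega)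
  · rw [inv_mul_zpow_conj_mul_of_commute commute_s_t s_conj_a]
    exact Submonoid.mul_mem _ (t_lamp_mem_lampMonoid j) (t_lamp_mem_lampMonoid _)

theorem t_mul_lamp_mul_inv_mem : ∀ x ∈ lamps, t * x * t⁻¹ ∈ lampMonoid := by
  rintro _ (⟨i, hi, rfl⟩ | ⟨j, rfl⟩)
  · refine mul_zpow_conj_mul_inv_mem_of_nonpos _ a_mul_a commute_s_t.symm t_conj_a ?_
      (fun i hi ↦ s_lamp_mem_lampMonoid hi) hi.le
    simpa using t_lamp_mem_lampMonoid (-1)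
  · rw [mul_zpow_conj_mul_inv]
    exact t_lamp_mem_lampMonoid _

theorem t_inv_mul_lamp_mul_mem : ∀ x ∈ lamps, t⁻¹ * x * t⁻¹⁻¹ ∈ lampMonoid := by
  rintro _ (⟨i, hi, rfl⟩ | ⟨j, rfl⟩) <;> rw [inv_inv]
  · rw [inv_mul_zpow_conj_mul_of_commute commute_s_t.symm t_conj_a]
    exact Submonoid.mul_mem _ (s_lamp_mem_lampMonoid hi.le) (s_lamp_mem_lampMonoid (by omega))
  · rw [inv_mul_zpow_conj_mul]
    exact t_lamp_mem_lampMonoid _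

def HasNormalForm (g : G) : Prop :=
  ∃ p q : ℤ, ∃ m ∈ lampMonoid, g = m * s ^ p * t ^ q

theorem HasNormalForm.mul_left_of_mem {x g : G} (hx : x ∈ lampMonoid) (hg : HasNormalForm g) :
    HasNormalForm (x * g) := by
  obtain ⟨p, q, m, hm, rfl⟩ := hg
  exact ⟨p, q, x * m, lampMonoid.mul_mem hx hm, by simp only [mul_assoc]⟩

theorem HasNormalForm.mul_left {x g : G} (hx : ∀ y ∈ lamps, x * y * x⁻¹ ∈ lampMonoid)
    (hst : ∀ p q : ℤ, ∃ p' q' : ℤ, x * (s ^ p * t ^ q) = s ^ p' * t ^ q')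
    (hg : HasNormalForm g) : HasNormalForm (x * g) := by
  obtain ⟨p, q, m, hm, rfl⟩ := hg
  obtain ⟨p', q', h⟩ := hst p q
  refine ⟨p', q', x * m * x⁻¹, Submonoid.mul_mul_inv_mem_closure hx hm, ?_⟩
  rw [mul_assoc _ (s ^ p'), ← h]
  group

theorem hasNormalForm (g : G) : HasNormalForm g := by
  have hg : g ∈ Subgroup.closure (Set.range PresentedGroup.of) := by simp
  have hs : ∀ n p q : ℤ, ∃ p' q' : ℤ, s ^ n * (s ^ p * t ^ q) = s ^ p' * t ^ q' :=
    fun n p q ↦ ⟨n + p, q, by rw [← mul_assoc, ← zpow_add]⟩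
  have ht : ∀ n p q : ℤ, ∃ p' q' : ℤ, t ^ n * (s ^ p * t ^ q) = s ^ p' * t ^ q' :=
    fun n p q ↦ ⟨p, n + q, by
      rw [← mul_assoc, ((commute_s_t.zpow_zpow p n).eq).symm, mul_assoc, ← zpow_add]⟩
  induction hg using Subgroup.closure_induction_left with
  | one => exact ⟨0, 0, 1, lampMonoid.one_mem, by simp⟩
  | mul_left x hx y _ ih =>
    obtain ⟨_ | _ | _, rfl⟩ := hx
    · exact ih.mul_left_of_mem a_mem_lampMonoid
    · exact ih.mul_left (x := s) s_mul_lamp_mul_inv_mem (by simpa using hs 1)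
    · exact ih.mul_left (x := t) t_mul_lamp_mul_inv_mem (by simpa using ht 1)
  | inv_mul_cancel x hx y _ ih =>
    obtain ⟨_ | _ | _, rfl⟩ := hx
    · exact ih.mul_left_of_mem (x := a⁻¹)
        (inv_eq_of_mul_eq_one_right a_mul_a ▸ a_mem_lampMonoid)
    · exact ih.mul_left (x := s⁻¹) s_inv_mul_lamp_mul_mem (by simpa using hs (-1))
    · exact ih.mul_left (x := t⁻¹) t_inv_mul_lamp_mul_mem (by simpa using ht (-1))

/-- Every element `g` of `G` can be written as `g = u · sᵖ tᑫ`, where `u` is a finite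
product of conjugates `s⁻ⁱ a sⁱ` (with `i < 0`) and `t⁻ʲ a tʲ` (with `j ∈ ℤ`). -/
theorem normal_form (g : G) :
    ∃ (p q : ℤ) (u : List G),
      (∀ x ∈ u, (∃ i : ℤ, i < 0 ∧ x = (s ^ i)⁻¹ * a * s ^ i) ∨
                (∃ j : ℤ, x = (t ^ j)⁻¹ * a * t ^ j)) ∧
      g = u.prod * s ^ p * t ^ q := by
  obtain ⟨p, q, m, hm, rfl⟩ := hasNormalForm g
  obtain ⟨u, hu, rfl⟩ := Submonoid.exists_list_of_mem_closure hm
  exact ⟨p, q, u, hu, rfl⟩
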